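/- For every γ > 0 and every sequence y : ℕ → {−1, 1}, the function f : [0,1] → ℝ that is piecewise linear with f(2^{−n}) = y_n·γ for every integer n ≥ 0 (linear on each interval [2^{−(n+1)}, 2^{−n}]) and f(0) = 0 satisfies ‖f‖_w ≤ 6γ. -/

import Mathlib

open MeasureTheory Set ENNReal

/-- The local slope of `f` at `x`: `Λ_f(x) = sup_{x' ∈ [0,1], x' ≠ x} |f(x) − f(x')|/|x − x'|`,
valued in `[0,∞]`. -/
noncomputable def locSlope (f : ℝ → ℝ) (x : ℝ) : ℝ≥0∞ :=
  ⨆ (x' : ℝ) (_ : x' ∈ Set.Icc (0:ℝ) 1) (_ : x' ≠ x),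
    ENNReal.ofReal (|f x - f x'| / |x - x'|)

/-- Strong average smoothness: `‖f‖_s = ∫_{[0,1]} Λ_f(x) dx`. -/
noncomputable def strongNorm (f : ℝ → ℝ) : ℝ≥0∞ :=
  ∫⁻ x in Set.Icc (0:ℝ) 1, locSlope f x

/-- Weak average smoothness: `‖f‖_w = sup_{t>0} t·λ({x ∈ [0,1] : Λ_f(x) ≥ t})`. -/
noncomputable def weakNorm (f : ℝ → ℝ) : ℝ≥0∞ :=
  ⨆ (t : ℝ) (_ : 0 < t),
    ENNReal.ofReal t * volume {x ∈ Set.Icc (0:ℝ) 1 | ENNReal.ofReal t ≤ locSlope f x}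

/-- Total variation of `f` on `[0,1]`. -/
noncomputable def totalVar (f : ℝ → ℝ) : ℝ≥0∞ := eVariationOn f (Set.Icc 0 1)

/-!
The local slope of `f` at `x ∈ (0,1]` is at most `6γ/x`, so `{Λ_f ≥ t} ⊆ [0, 6γ/t]`.
Two facts give the slope bound: `|f| ≤ γ`, and `f` is `4γ/u`-Lipschitz on `[u, 1]`, because the
affine piece containing `u` has length at least `u/2` and rise at most `2γ`, while the pieces to
its right are flatter. For `z ≥ 2x/3` the Lipschitz bound on `[min x z, 1]` gives slope at most
`6γ/x`; for `z < 2x/3` the increment `|f x - f z| ≤ 2γ` over a distance `≥ x/3` does.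
-/

section Slopes

variable {f : ℝ → ℝ}

theorem abs_sub_le_of_affineOn {a b c d : ℝ} (hab : a < b) (hf : ∀ x ∈ Icc a b, f x = c * x + d)
    {x z : ℝ} (hx : x ∈ Icc a b) (hz : z ∈ Icc a b) :
    |f x - f z| ≤ |f b - f a| / (b - a) * |x - z| := by
  have hba : 0 < b - a := sub_pos.2 hab
  have hslope : |f b - f a| / (b - a) = |c| := by
    rw [hf b (right_mem_Icc.2 hab.le), hf a (left_mem_Icc.2 hab.le),
      show c * b + d - (c * a + d) = c * (b - a) by ring, abs_mul, abs_of_pos hba,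
      mul_div_cancel_right₀ _ hba.ne']
  rw [hslope, hf x hx, hf z hz, show c * x + d - (c * z + d) = c * (x - z) by ring, abs_mul]

theorem abs_le_max_of_affineOn {a b c d : ℝ} (hf : ∀ x ∈ Icc a b, f x = c * x + d)
    {x : ℝ} (hx : x ∈ Icc a b) : |f x| ≤ max |f a| |f b| := by
  have ha : a ∈ Icc a b := left_mem_Icc.2 (hx.1.trans hx.2)
  have hb : b ∈ Icc a b := right_mem_Icc.2 (hx.1.trans hx.2)
  rw [hf x hx, hf a ha, hf b hb]
  rcases le_total 0 c with hc | hc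
  · exact abs_le_max_abs_abs (by gcongr; exact hx.1) (by gcongr; exact hx.2)
  · rw [max_comm]
    exact abs_le_max_abs_abs (by nlinarith [hx.2]) (by nlinarith [hx.1])

theorem abs_sub_le_mul_on_Icc_union {a b c K : ℝ} (hab : a ≤ b) (hbc : b ≤ c)
    (h₁ : ∀ x ∈ Icc a b, ∀ z ∈ Icc a b, |f x - f z| ≤ K * |x - z|)
    (h₂ : ∀ x ∈ Icc b c, ∀ z ∈ Icc b c, |f x - f z| ≤ K * |x - z|) :
    ∀ x ∈ Icc a c, ∀ z ∈ Icc a c, |f x - f z| ≤ K * |x - z| := by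
  suffices h : ∀ x ∈ Icc a c, ∀ z ∈ Icc a c, x ≤ z → |f x - f z| ≤ K * |x - z| by
    intro x hx z hz
    rcases le_total x z with hxz | hzx
    · exact h x hx z hz hxz
    · rw [abs_sub_comm (f x), abs_sub_comm x]
      exact h z hz x hx hzx
  intro x hx z hz hxz
  rcases le_total z b with hzb | hbz
  · exact h₁ x ⟨hx.1, hxz.trans hzb⟩ z ⟨hx.1.trans hxz, hzb⟩
  rcases le_total b x with hbx | hxb
  · exact h₂ x ⟨hbx, hx.2⟩ z ⟨hbx.trans hxz, hz.2⟩
  calc |f x - f z| ≤ |f x - f b| + |f b - f z| := abs_sub_le _ _ _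
    _ ≤ K * |x - b| + K * |b - z| :=
        add_le_add (h₁ x ⟨hx.1, hxb⟩ b ⟨hab, le_rfl⟩) (h₂ b ⟨le_rfl, hbc⟩ z ⟨hbz, hz.2⟩)
    _ = K * |x - z| := by
        rw [abs_of_nonpos (sub_nonpos.2 hxb), abs_of_nonpos (sub_nonpos.2 hbz),
          abs_of_nonpos (sub_nonpos.2 hxz)]
        ring

theorem locSlope_le_ofReal {x K : ℝ}
    (h : ∀ z ∈ Icc (0 : ℝ) 1, |f x - f z| ≤ K * |x - z|) : locSlope f x ≤ ENNReal.ofReal K := by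
  refine iSup₂_le fun z hz => iSup_le fun hzx => ENNReal.ofReal_le_ofReal ?_
  rw [div_le_iff₀ (abs_pos.2 (sub_ne_zero.2 hzx.symm))]
  exact h z hz

theorem weakNorm_le_of_locSlope_le {C : ℝ} (hC : 0 ≤ C)
    (h : ∀ x ∈ Ioc (0 : ℝ) 1, locSlope f x ≤ ENNReal.ofReal (C / x)) :
    weakNorm f ≤ ENNReal.ofReal C := by
  refine iSup₂_le fun t ht => ?_
  have hsub : {x ∈ Icc (0 : ℝ) 1 | ENNReal.ofReal t ≤ locSlope f x} ⊆ Icc 0 (C / t) := by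
    rintro x ⟨⟨hx0, hx1⟩, hxt⟩
    refine ⟨hx0, ?_⟩
    rcases hx0.eq_or_lt with rfl | hx0
    · positivity
    have htx : t ≤ C / x :=
      (ENNReal.ofReal_le_ofReal_iff (by positivity)).1 (hxt.trans (h x ⟨hx0, hx1⟩))
    rw [le_div_iff₀ ht]
    rwa [le_div_iff₀ hx0, mul_comm] at htx
  calc ENNReal.ofReal t * volume {x ∈ Icc (0 : ℝ) 1 | ENNReal.ofReal t ≤ locSlope f x}
      ≤ ENNReal.ofReal t * ENNReal.ofReal (C / t) := by
        grw [measure_mono hsub, Real.volume_Icc, sub_zero]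
    _ = ENNReal.ofReal C := by rw [← ENNReal.ofReal_mul ht.le, mul_div_cancel₀ _ ht.ne']

theorem abs_sub_le_of_abs_le_of_lipschitz_tail {M : ℝ}
    (hbound : ∀ x ∈ Icc (0 : ℝ) 1, |f x| ≤ M)
    (htail : ∀ u ∈ Ioc (0 : ℝ) 1, ∀ x ∈ Icc u 1, ∀ z ∈ Icc u 1, |f x - f z| ≤ 4 * M / u * |x - z|)
    {x z : ℝ} (hx : x ∈ Ioc (0 : ℝ) 1) (hz : z ∈ Icc (0 : ℝ) 1) :
    |f x - f z| ≤ 6 * M / x * |x - z| := by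
  have hM : 0 ≤ M := (abs_nonneg _).trans (hbound 0 ⟨le_rfl, zero_le_one⟩)
  have hx0 := hx.1
  rcases le_total x z with hxz | hzx
  · calc |f x - f z| ≤ 4 * M / x * |x - z| := htail x hx x ⟨le_rfl, hx.2⟩ z ⟨hxz, hz.2⟩
      _ ≤ 6 * M / x * |x - z| := by gcongr; norm_num
  by_cases hnear : 2 * x ≤ 3 * z
  · have hz0 : 0 < z := by linarith
    calc |f x - f z| ≤ 4 * M / z * |x - z| := htail z ⟨hz0, hz.2⟩ x ⟨hzx, hx.2⟩ z ⟨le_rfl, hz.2⟩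
      _ ≤ 6 * M / x * |x - z| := by
          refine mul_le_mul_of_nonneg_right ?_ (abs_nonneg _)
          rw [div_le_div_iff₀ hz0 hx0]
          nlinarith
  · calc |f x - f z| ≤ |f x| + |f z| := abs_sub _ _
      _ ≤ M + M := add_le_add (hbound x (Ioc_subset_Icc_self hx)) (hbound z hz)
      _ ≤ 6 * M / x * |x - z| := by
          rw [abs_of_nonneg (sub_nonneg.2 hzx), div_mul_eq_mul_div, le_div_iff₀ hx0]
          nlinarith

end Slopes

section Zigzag

variable {γ : ℝ} {y : ℕ → ℝ} {f : ℝ → ℝ}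

theorem abs_zigzag_node (hγ : 0 < γ) (hy : ∀ n, y n = 1 ∨ y n = -1)
    (hval : ∀ n : ℕ, f ((1 / 2 : ℝ) ^ n) = y n * γ) (n : ℕ) : |f ((1 / 2 : ℝ) ^ n)| = γ := by
  rw [hval, abs_mul, abs_of_pos hγ]
  rcases hy n with h | h <;> simp [h]

theorem zigzag_lipschitzOn_piece (hγ : 0 < γ) (hy : ∀ n, y n = 1 ∨ y n = -1)
    (hval : ∀ n : ℕ, f ((1 / 2 : ℝ) ^ n) = y n * γ)
    (hlin : ∀ n : ℕ, ∃ c d : ℝ,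
      ∀ x ∈ Set.Icc ((1 / 2 : ℝ) ^ (n + 1)) ((1 / 2 : ℝ) ^ n), f x = c * x + d) (n : ℕ) :
    ∀ x ∈ Icc ((1 / 2 : ℝ) ^ (n + 1)) ((1 / 2 : ℝ) ^ n),
      ∀ z ∈ Icc ((1 / 2 : ℝ) ^ (n + 1)) ((1 / 2 : ℝ) ^ n),
        |f x - f z| ≤ 2 * γ / (1 / 2 : ℝ) ^ (n + 1) * |x - z| := by
  obtain ⟨c, d, hcd⟩ := hlin n
  intro x hx z hz
  have hlen : (1 / 2 : ℝ) ^ n - (1 / 2) ^ (n + 1) = (1 / 2) ^ (n + 1) := by ring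
  have hlt : (1 / 2 : ℝ) ^ (n + 1) < (1 / 2) ^ n :=
    pow_lt_pow_right_of_lt_one₀ one_half_pos one_half_lt_one (Nat.lt_succ_self n)
  have hrise : |f ((1 / 2 : ℝ) ^ n) - f ((1 / 2) ^ (n + 1))| ≤ 2 * γ := by
    linarith [abs_sub (f ((1 / 2 : ℝ) ^ n)) (f ((1 / 2) ^ (n + 1))),
      abs_zigzag_node hγ hy hval n, abs_zigzag_node hγ hy hval (n + 1)]
  calc |f x - f z|
      ≤ |f ((1 / 2 : ℝ) ^ n) - f ((1 / 2) ^ (n + 1))| / ((1 / 2 : ℝ) ^ n - (1 / 2) ^ (n + 1))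
          * |x - z| := abs_sub_le_of_affineOn hlt hcd hx hz
    _ ≤ 2 * γ / (1 / 2 : ℝ) ^ (n + 1) * |x - z| := by rw [hlen]; gcongr

theorem zigzag_lipschitzOn_tail (hγ : 0 < γ) (hy : ∀ n, y n = 1 ∨ y n = -1)
    (hval : ∀ n : ℕ, f ((1 / 2 : ℝ) ^ n) = y n * γ)
    (hlin : ∀ n : ℕ, ∃ c d : ℝ,
      ∀ x ∈ Set.Icc ((1 / 2 : ℝ) ^ (n + 1)) ((1 / 2 : ℝ) ^ n), f x = c * x + d) (n : ℕ) :
    ∀ x ∈ Icc ((1 / 2 : ℝ) ^ (n + 1)) 1, ∀ z ∈ Icc ((1 / 2 : ℝ) ^ (n + 1)) 1,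
      |f x - f z| ≤ 2 * γ / (1 / 2 : ℝ) ^ (n + 1) * |x - z| := by
  induction n with
  | zero => simpa using zigzag_lipschitzOn_piece hγ hy hval hlin 0
  | succ n ih =>
    have hstep : (1 / 2 : ℝ) ^ (n + 2) ≤ (1 / 2) ^ (n + 1) :=
      pow_le_pow_of_le_one (by norm_num) (by norm_num) (Nat.le_succ _)
    refine abs_sub_le_mul_on_Icc_union hstep (pow_le_one₀ (by norm_num) (by norm_num))
      (zigzag_lipschitzOn_piece hγ hy hval hlin (n + 1)) fun x hx z hz => (ih x hx z hz).trans ?_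
    gcongr

theorem zigzag_lipschitzOn_Icc_one (hγ : 0 < γ) (hy : ∀ n, y n = 1 ∨ y n = -1)
    (hval : ∀ n : ℕ, f ((1 / 2 : ℝ) ^ n) = y n * γ)
    (hlin : ∀ n : ℕ, ∃ c d : ℝ,
      ∀ x ∈ Set.Icc ((1 / 2 : ℝ) ^ (n + 1)) ((1 / 2 : ℝ) ^ n), f x = c * x + d)
    {u : ℝ} (hu : u ∈ Ioc (0 : ℝ) 1) :
    ∀ x ∈ Icc u 1, ∀ z ∈ Icc u 1, |f x - f z| ≤ 4 * γ / u * |x - z| := by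
  obtain ⟨n, hnu, hun⟩ := exists_nat_pow_near_of_lt_one hu.1 hu.2 one_half_pos one_half_lt_one
  have hconst : 2 * γ / (1 / 2 : ℝ) ^ (n + 1) ≤ 4 * γ / u := by
    rw [div_le_div_iff₀ (by positivity) hu.1, pow_succ]
    nlinarith
  intro x hx z hz
  calc |f x - f z| ≤ 2 * γ / (1 / 2 : ℝ) ^ (n + 1) * |x - z| :=
        zigzag_lipschitzOn_tail hγ hy hval hlin n x ⟨hnu.le.trans hx.1, hx.2⟩ z
          ⟨hnu.le.trans hz.1, hz.2⟩
    _ ≤ 4 * γ / u * |x - z| := by gcongr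

theorem abs_zigzag_le (hγ : 0 < γ) (hy : ∀ n, y n = 1 ∨ y n = -1) (hf0 : f 0 = 0)
    (hval : ∀ n : ℕ, f ((1 / 2 : ℝ) ^ n) = y n * γ)
    (hlin : ∀ n : ℕ, ∃ c d : ℝ,
      ∀ x ∈ Set.Icc ((1 / 2 : ℝ) ^ (n + 1)) ((1 / 2 : ℝ) ^ n), f x = c * x + d)
    {x : ℝ} (hx : x ∈ Icc (0 : ℝ) 1) : |f x| ≤ γ := by
  rcases hx.1.eq_or_lt with rfl | hx0
  · simpa [hf0] using hγ.le
  obtain ⟨n, hnx, hxn⟩ := exists_nat_pow_near_of_lt_one hx0 hx.2 one_half_pos one_half_lt_one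
  obtain ⟨c, d, hcd⟩ := hlin n
  calc |f x| ≤ max |f ((1 / 2 : ℝ) ^ (n + 1))| |f ((1 / 2 : ℝ) ^ n)| :=
        abs_le_max_of_affineOn hcd ⟨hnx.le, hxn⟩
    _ = γ := by rw [abs_zigzag_node hγ hy hval, abs_zigzag_node hγ hy hval, max_self]

end Zigzag

/-- For `γ > 0` and any `±1`-sequence `y`, the piecewise linear function with
`f(2^{−n}) = y_n·γ` and `f(0) = 0` satisfies `‖f‖_w ≤ 6γ`. -/
theorem zigzag_weak_bound (γ : ℝ) (hγ : 0 < γ) (y : ℕ → ℝ)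
    (hy : ∀ n, y n = 1 ∨ y n = -1) (f : ℝ → ℝ) (hf0 : f 0 = 0)
    (hval : ∀ n : ℕ, f ((1 / 2 : ℝ) ^ n) = y n * γ)
    (hlin : ∀ n : ℕ, ∃ c d : ℝ,
      ∀ x ∈ Set.Icc ((1 / 2 : ℝ) ^ (n + 1)) ((1 / 2 : ℝ) ^ n), f x = c * x + d) :
    weakNorm f ≤ ENNReal.ofReal (6 * γ) :=
  weakNorm_le_of_locSlope_le (by positivity) fun _ hx => locSlope_le_ofReal fun _ hz =>
    abs_sub_le_of_abs_le_of_lipschitz_tail (fun _ => abs_zigzag_le hγ hy hf0 hval hlin)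
      (fun _ hu => zigzag_lipschitzOn_Icc_one hγ hy hval hlin hu) hx hz
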